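/- Let a ∈ ℝ, δ > 0, τ > 0, and N ∈ ℕ be such that a − (nπ)² < −δ for all n > N. Then there exists C₅ > 0, depending only on a, δ, τ, N, such that for every real square-summable sequence (c_n)_{n>N} and every t ≥ τ, the series Σ_{n>N} |c_n| e^{(a−(nπ)²)t} converges and Σ_{n>N} |c_n| e^{(a−(nπ)²)t} ≤ C₅ e^{−δt} (Σ_{n>N} c_n²)^{1/2}. -/
import Mathlib


/-- tail-mode estimate.  If `a - (nπ)² < -δ` for all `n > N`, there is a
constant `C₅ > 0` (depending only on `a, δ, τ, N`) such that for every square-summable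
sequence `(cₙ)_{n>N}` and every `t ≥ τ`, the series `Σ_{n>N} |cₙ| e^{(a-(nπ)²)t}`
converges and is bounded by `C₅ e^{-δt} (Σ_{n>N} cₙ²)^{1/2}`. -/
theorem stmt4 (a δ τ : ℝ) (N : ℕ) (hδ : 0 < δ) (hτ : 0 < τ)
    (hN : ∀ n : ℕ, N < n → a - (n * Real.pi) ^ 2 < -δ) :
    ∃ C₅ > 0, ∀ c : ℕ → ℝ,
      Summable (fun n : {n : ℕ // N < n} => (c n) ^ 2) →
      ∀ t, τ ≤ t →
        Summable (fun n : {n : ℕ // N < n} =>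
          |c n| * Real.exp ((a - ((n : ℕ) * Real.pi) ^ 2) * t)) ∧
        (∑' n : {n : ℕ // N < n}, |c n| * Real.exp ((a - ((n : ℕ) * Real.pi) ^ 2) * t))
          ≤ C₅ * Real.exp (-δ * t) *
            Real.sqrt (∑' n : {n : ℕ // N < n}, (c n) ^ 2) := by
  have hπ2 : (0:ℝ) < Real.pi ^ 2 * τ := by positivity
  set r := Real.exp (-(Real.pi ^ 2 * τ)) with hr
  have hr0 : (0:ℝ) ≤ r := (Real.exp_pos _).le
  have hr1 : r < 1 := by
    rw [hr, Real.exp_lt_one_iff]; linarith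
  -- summability of the comparison sequence over ℕ
  have hg : Summable (fun n : ℕ => Real.exp ((a + δ - (n * Real.pi) ^ 2) * τ)) := by
    apply Summable.of_nonneg_of_le (fun n => (Real.exp_pos _).le) (fun n => ?_)
      ((summable_geometric_of_lt_one hr0 hr1).mul_left (Real.exp ((a + δ) * τ)))
    have hrn : Real.exp ((a + δ) * τ) * r ^ n
        = Real.exp ((a + δ) * τ - Real.pi ^ 2 * τ * n) := by
      rw [hr, ← Real.exp_nat_mul, ← Real.exp_add]; ring_nf
    rw [hrn, Real.exp_le_exp]
    have hn2 : (n : ℝ) ≤ (n : ℝ) ^ 2 := by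
      exact_mod_cast Nat.le_self_pow (by norm_num) n
    nlinarith [Real.pi_pos, sq_nonneg ((n:ℝ) * Real.pi)]
  have hgsub : Summable (fun n : {n : ℕ // N < n} =>
      Real.exp ((a + δ - ((n : ℕ) * Real.pi) ^ 2) * τ)) := hg.subtype _
  set K := ∑' n : {n : ℕ // N < n}, Real.exp ((a + δ - ((n : ℕ) * Real.pi) ^ 2) * τ) with hK
  have hK0 : 0 ≤ K := tsum_nonneg (fun n => (Real.exp_pos _).le)
  refine ⟨K + 1, by linarith, ?_⟩
  intro c hc t ht
  set S := Real.sqrt (∑' n : {n : ℕ // N < n}, (c n) ^ 2) with hS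
  have hS0 : 0 ≤ S := Real.sqrt_nonneg _
  have hcS : ∀ n : {n : ℕ // N < n}, |c n| ≤ S := by
    intro n
    have h1 : (c n) ^ 2 ≤ ∑' m : {m : ℕ // N < m}, (c m) ^ 2 :=
      Summable.le_tsum hc n (fun m _ => sq_nonneg _)
    calc |c n| = Real.sqrt ((c n) ^ 2) := (Real.sqrt_sq_eq_abs _).symm
      _ ≤ S := Real.sqrt_le_sqrt h1
  have hbound : ∀ n : {n : ℕ // N < n},
      |c n| * Real.exp ((a - ((n : ℕ) * Real.pi) ^ 2) * t)
        ≤ S * (Real.exp ((a + δ - ((n : ℕ) * Real.pi) ^ 2) * τ) * Real.exp (-δ * t)) := by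
    intro n
    have hlm : a - ((n : ℕ) * Real.pi) ^ 2 < -δ := hN n n.2
    have hE : Real.exp ((a - ((n : ℕ) * Real.pi) ^ 2) * t)
        ≤ Real.exp ((a + δ - ((n : ℕ) * Real.pi) ^ 2) * τ) * Real.exp (-δ * t) := by
      rw [← Real.exp_add, Real.exp_le_exp]
      nlinarith
    exact mul_le_mul (hcS n) hE (Real.exp_nonneg _) hS0
  have hsum' : Summable (fun n : {n : ℕ // N < n} =>
      S * (Real.exp ((a + δ - ((n : ℕ) * Real.pi) ^ 2) * τ) * Real.exp (-δ * t))) :=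
    (hgsub.mul_right _).mul_left S
  have hsum : Summable (fun n : {n : ℕ // N < n} =>
      |c n| * Real.exp ((a - ((n : ℕ) * Real.pi) ^ 2) * t)) :=
    Summable.of_nonneg_of_le (fun n => by positivity) hbound hsum'
  refine ⟨hsum, ?_⟩
  have h2 : (∑' n : {n : ℕ // N < n}, |c n| * Real.exp ((a - ((n : ℕ) * Real.pi) ^ 2) * t))
      ≤ ∑' n : {n : ℕ // N < n},
        S * (Real.exp ((a + δ - ((n : ℕ) * Real.pi) ^ 2) * τ) * Real.exp (-δ * t)) :=
    Summable.tsum_le_tsum hbound hsum hsum'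
  have h3 : (∑' n : {n : ℕ // N < n},
      S * (Real.exp ((a + δ - ((n : ℕ) * Real.pi) ^ 2) * τ) * Real.exp (-δ * t)))
      = S * (K * Real.exp (-δ * t)) := by
    rw [tsum_mul_left, tsum_mul_right]
  rw [h3] at h2
  have he : 0 < Real.exp (-δ * t) := Real.exp_pos _
  nlinarith
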